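/- Under Assumption 1 (n ≥ 2, d even, ᾱ ∉ A_0), with m = d and β̊ the discrete Fourier discriminator β̊_ℓ(u) = e^{i2πℓu/d}: almost surely, for every α̊ ∈ A_n, the equilibrium (α̊, β̊) is not a Nash equilibrium of V_n; in fact there exists a discriminator parameter β with V_n(α̊, β) > 0 = V_n(α̊, β̊), and the Hessian of β ↦ V_n(α̊, β) (in the real and imaginary parts of the β-variables) at (α̊, β̊) is positive semidefinite with at least one strictly positive eigenvalue. -/

import Mathlib

open MeasureTheory ProbabilityTheory Filter Matrix
open scoped Real

noncomputable section

/-- Discrete Fourier transform of `x : ℝ^d` at frequency `ω = 2πk/d`. -/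
def dft (d : ℕ) (x : Fin d → ℝ) (k : Fin d) : ℂ :=
  ∑ u : Fin d, (x u : ℂ) *
    Complex.exp (-(2 * Real.pi * Complex.I * ((k : ℕ) : ℂ) * ((u : ℕ) : ℂ)) / (d : ℂ))

/-- Circular convolution on `ℝ^d` (indices mod `d`). -/
def cconv (d : ℕ) (a z : Fin d → ℝ) : Fin d → ℝ := fun u => ∑ v : Fin d, a v * z (u - v)

/-- Covariance matrix of `a ⋆ Z`, `Z ~ N(0, I_d)` white noise. -/
def covMat (d : ℕ) (a : Fin d → ℝ) : Matrix (Fin d) (Fin d) ℝ :=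
  Matrix.of fun u u' => ∑ v : Fin d, a (u - v) * a (u' - v)

/-- Spectral (operator) norm of a matrix. -/
def specNorm (d : ℕ) (M : Matrix (Fin d) (Fin d) ℝ) : ℝ :=
  ‖Matrix.toEuclideanCLM (𝕜 := ℝ) M‖

/-- Euclidean norm. -/
def l2norm (d : ℕ) (x : Fin d → ℝ) : ℝ := Real.sqrt (∑ u : Fin d, x u ^ 2)

/-- Empirical covariance matrix of the first `n` samples. -/
def empCov (d n : ℕ) (y : ℕ → Fin d → ℝ) : Matrix (Fin d) (Fin d) ℝ :=
  (n : ℝ)⁻¹ • ∑ i ∈ Finset.range n, Matrix.vecMulVec (y i) (y i)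

/-- Empirical mean of `|ŷ(ω)|²` over the first `n` samples. -/
def empPS (d n : ℕ) (y : ℕ → Fin d → ℝ) (k : Fin d) : ℝ :=
  (n : ℝ)⁻¹ * ∑ i ∈ Finset.range n, Complex.normSq (dft d (y i) k)

/-- The consistent-generator set `A_n` (for a fixed sample `(z̄_i, z_i)_{i<n}`). -/
def An (d n : ℕ) (abar : Fin d → ℝ) (zbar z : ℕ → Fin d → ℝ) : Set (Fin d → ℝ) :=
  {a | ∀ k : Fin d, Complex.normSq (dft d a k) =
      empPS d n (fun i => cconv d abar (zbar i)) k / empPS d n z k}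


/-- The combined family of all Gaussian coordinates of the two sample sequences
`z̄` (at `false`) and `z` (at `true`). -/
def coords {Ω : Type*} (d : ℕ) (zbar z : ℕ → Ω → Fin d → ℝ) :
    Bool × ℕ × Fin d → Ω → ℝ :=
  fun p ω => if p.1 then z p.2.1 ω p.2.2 else zbar p.2.1 ω p.2.2

/-- `(z̄_i)` and `(z_i)` are mutually independent i.i.d. `N(0, I_d)` random vectors:
all the real coordinates are independent standard Gaussians. -/
def IsWhiteNoisePair {Ω : Type*} [MeasureSpace Ω] (d : ℕ)
    (zbar z : ℕ → Ω → Fin d → ℝ) : Prop :=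
  (∀ i, Measurable (zbar i)) ∧ (∀ i, Measurable (z i)) ∧
    iIndepFun (coords d zbar z) ℙ ∧
    ∀ p : Bool × ℕ × Fin d, Measure.map (coords d zbar z p) ℙ = gaussianReal 0 1

/-- Hermitian pairing `⟨b, x⟩ = ∑_u b(u)* x(u)` between `b ∈ ℂ^d` and `x ∈ ℝ^d`. -/
def cInner (d : ℕ) (b : Fin d → ℂ) (x : Fin d → ℝ) : ℂ :=
  ∑ u : Fin d, (starRingEnd ℂ) (b u) * (x u : ℂ)

/-- `r_{n,ℓ}(α, β) = E_n(|⟨β_ℓ, X⟩|²) − E_n(|⟨β_ℓ, α ⋆ Z⟩|²)` for the complex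
discriminator, given samples `x_i = xs i`, `z_i = zs i`. -/
def rCpx (d n : ℕ) (xs zs : ℕ → Fin d → ℝ) (a : Fin d → ℝ) (bl : Fin d → ℂ) : ℝ :=
  (n : ℝ)⁻¹ * ∑ i ∈ Finset.range n, Complex.normSq (cInner d bl (xs i))
    - (n : ℝ)⁻¹ * ∑ i ∈ Finset.range n, Complex.normSq (cInner d bl (cconv d a (zs i)))

/-- The complex-discriminator objective `V_n(α, β) = ∑_{ℓ<m} r_{n,ℓ}(α, β)²`. -/
def VCpx (d n m : ℕ) (xs zs : ℕ → Fin d → ℝ) (a : Fin d → ℝ)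
    (b : Fin m → Fin d → ℂ) : ℝ :=
  ∑ ℓ : Fin m, rCpx d n xs zs a (b ℓ) ^ 2

/-- The discrete Fourier discriminator `β̊_ℓ(u) = e^{i2πℓu/d}`. -/
def fourierDisc (d : ℕ) : Fin d → Fin d → ℂ :=
  fun ℓ u => Complex.exp (2 * Real.pi * Complex.I * ((ℓ : ℕ) : ℂ) * ((u : ℕ) : ℂ) / (d : ℂ))


/-!
In the Fourier basis `β̊` the loss `r_{n,ℓ}` is the quadratic form of the difference `M` of the
empirical covariances of `X` and `α̊ ⋆ Z`, and `α̊ ∈ A_n` says exactly that the diagonal of `M`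
vanishes. Hence `V_n(α̊, β̊) = 0`, and along a line `β̊ + tη` every `r_{n,ℓ}` is
`t p_ℓ + t² q_ℓ`, so the Hessian `2 ∑ p_ℓ²` is positive semidefinite. An off-diagonal entry
`W = M(k, k') ≠ 0` gives the row `β̊_k + W̄ β̊_{k'}` with `r = 2|W|²`, and a direction of positive
curvature.

For `k = 0`, `k' = d/2` all DFT values are real. Since convolution by `ᾱ` preserves the coherence
`|E_n(x̂(k) x̂(k')*)|² / (E_n|x̂(k)|² E_n|x̂(k')|²)`, the identity `W = 0` forces the coherences
of the samples `z̄` and `z` to agree. This polynomial identity in the Gaussian coordinates fails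
almost surely, as is seen one coordinate at a time: on a coordinate line a nonzero polynomial has
finitely many zeros, while an independent Gaussian coordinate has a density.
-/

open Finset ComplexConjugate

theorem iteratedDeriv_two_sum_sq {ι : Type*} (s : Finset ι) (p q : ι → ℝ) :
    iteratedDeriv 2 (fun t : ℝ => ∑ l ∈ s, (t * p l + t ^ 2 * q l) ^ 2) 0
      = 2 * ∑ l ∈ s, p l ^ 2 := by
  have hline : ∀ l t, HasDerivAt (fun t : ℝ => t * p l + t ^ 2 * q l) (p l + 2 * t * q l) t :=
    fun l t => (((hasDerivAt_id' t).mul_const (p l)).fun_add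
      ((hasDerivAt_pow 2 t).mul_const (q l))).congr_deriv (by ring)
  have h1 : deriv (fun t : ℝ => ∑ l ∈ s, (t * p l + t ^ 2 * q l) ^ 2)
      = fun t => ∑ l ∈ s, 2 * (t * p l + t ^ 2 * q l) * (p l + 2 * t * q l) :=
    funext fun t => (HasDerivAt.fun_sum fun l _ =>
      ((hline l t).fun_pow 2).congr_deriv (by ring)).deriv
  have h2 : HasDerivAt (fun t : ℝ => ∑ l ∈ s, 2 * (t * p l + t ^ 2 * q l) * (p l + 2 * t * q l))
      (∑ l ∈ s, 2 * p l ^ 2) 0 :=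
    HasDerivAt.fun_sum fun l _ => (((hline l 0).const_mul 2).fun_mul
      ((((hasDerivAt_id' (0 : ℝ)).const_mul 2).mul_const (q l)).const_add (p l))).congr_deriv
      (by ring)
  rw [iteratedDeriv_succ, iteratedDeriv_one, h1, h2.deriv, mul_sum]

section IndependentCoordinates

variable {Ω ι : Type*} [MeasureSpace Ω] [DecidableEq ι]

theorem ProbabilityTheory.iIndepFun.indepFun_update_zero {Y : ι → Ω → ℝ} (hind : iIndepFun Y ℙ)
    (hY : ∀ i, Measurable (Y i)) (p : ι) :
    IndepFun (Y p) (fun ω => Function.update (fun i => Y i ω) p 0) ℙ := by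
  rw [iIndepFun_iff_iIndep] at hind
  rw [IndepFun_iff_Indep]
  have h := indep_iSup_of_disjoint (fun i => (hY i).comap_le) hind
    (Set.disjoint_singleton_left.2 (Set.notMem_compl_iff.2 rfl) : Disjoint {p} ({p}ᶜ : Set ι))
  refine indep_of_indep_of_le_right (indep_of_indep_of_le_left h ?_) ?_
  · exact le_iSup₂ (f := fun i (_ : i ∈ ({p} : Set ι)) => MeasurableSpace.comap (Y i) _) p rfl
  · refine Measurable.comap_le
      (@measurable_pi_lambda _ _ _ (⨆ i ∈ ({p}ᶜ : Set ι), MeasurableSpace.comap (Y i) _) _ _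
        fun i => ?_)
    by_cases hi : i = p
    · subst hi; simp [measurable_const]
    · simp only [Function.update_of_ne hi]
      exact (comap_measurable (Y i)).mono
        (le_iSup₂ (f := fun i (_ : i ∈ ({p}ᶜ : Set ι)) => MeasurableSpace.comap (Y i) _) i hi)
        le_rfl

/-- Fubini along the `p`-th coordinate, which is independent of the others. -/
theorem ProbabilityTheory.iIndepFun.ae_notMem_of_countable_lines
    [IsProbabilityMeasure (ℙ : Measure Ω)] {Y : ι → Ω → ℝ} (hind : iIndepFun Y ℙ)
    (hY : ∀ i, Measurable (Y i)) (p : ι)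
    (hlaw : Measure.map (Y p) ℙ ≪ volume) {S : Set (ι → ℝ)}
    (hS : MeasurableSet S) (hline : ∀ v, {x : ℝ | v + x • Pi.single p 1 ∈ S}.Countable) :
    ∀ᵐ ω ∂ℙ, (fun i => Y i ω) ∉ S := by
  set R : Ω → ι → ℝ := fun ω => Function.update (fun i => Y i ω) p 0
  have hR : Measurable R := measurable_pi_iff.2 fun i => by
    by_cases hi : i = p
    · subst hi; simp [R, measurable_const]
    · simpa [R, Function.update_of_ne hi] using hY i
  have hdecomp : ∀ ω, (fun i => Y i ω) = R ω + Y p ω • Pi.single p 1 := fun ω => by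
    ext i; by_cases hi : i = p
    · subst hi; simp [R]
    · simp [R, hi]
  set E : Set (ℝ × (ι → ℝ)) := {q | q.2 + q.1 • Pi.single p 1 ∈ S}
  have hE : MeasurableSet E := (measurable_pi_iff.2 fun i => by fun_prop) hS
  have hlawE : ((Measure.map (Y p) ℙ).prod (Measure.map R ℙ)) E = 0 := by
    have h0 : ∀ v, Measure.map (Y p) ℙ ((fun x => (x, v)) ⁻¹' E) = 0 :=
      fun v => hlaw ((hline v).measure_zero volume)
    simp [Measure.prod_apply_symm hE, h0]
  rw [← (indepFun_iff_map_prod_eq_prod_map_map (hY p).aemeasurable hR.aemeasurable).1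
    (hind.indepFun_update_zero hY p), Measure.map_apply ((hY p).prodMk hR) hE] at hlawE
  rw [ae_iff]
  simp only [not_not, hdecomp]
  exact hlawE

open Polynomial in
theorem ProbabilityTheory.iIndepFun.ae_ne_zero_of_eval_line
    [IsProbabilityMeasure (ℙ : Measure Ω)] {Y : ι → Ω → ℝ} (hind : iIndepFun Y ℙ)
    (hY : ∀ i, Measurable (Y i)) (p : ι)
    (hlaw : Measure.map (Y p) ℙ ≪ volume) {F L : (ι → ℝ) → ℝ} (hF : Measurable F)
    (hL : Measurable L) (g : (ι → ℝ) → ℝ[X])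
    (hFg : ∀ (v : ι → ℝ) (x : ℝ), F (v + x • Pi.single p 1) = (g v).eval x)
    (hLg : ∀ (v : ι → ℝ) (x : ℝ), L (v + x • Pi.single p 1) ≠ 0 → g v ≠ 0) :
    ∀ᵐ ω ∂ℙ, L (fun i => Y i ω) ≠ 0 → F (fun i => Y i ω) ≠ 0 := by
  have hS : MeasurableSet {v | F v = 0 ∧ L v ≠ 0} :=
    (measurableSet_eq_fun hF measurable_const).inter
      (measurableSet_eq_fun hL measurable_const).compl
  have hline : ∀ v, {x : ℝ | v + x • Pi.single p 1 ∈ {v | F v = 0 ∧ L v ≠ 0}}.Countable := by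
    intro v
    by_cases hg : g v = 0
    · convert Set.countable_empty
      exact Set.eq_empty_of_forall_notMem fun x hx => hLg v x hx.2 hg
    · refine (finite_setOfPred_isRoot hg).countable.mono fun x hx => ?_
      simpa [IsRoot, ← hFg] using hx.1
  filter_upwards [hind.ae_notMem_of_countable_lines hY p hlaw hS hline] with ω hω hL hF
  exact hω ⟨hF, hL⟩

end IndependentCoordinates

section Fourier

variable {d : ℕ}

def dftRoot (d : ℕ) (k : Fin d) : ℂ :=
  Complex.exp (-(2 * π * Complex.I * ((k : ℕ) : ℂ)) / (d : ℂ))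

lemma dft_eq_sum_dftRoot_pow (x : Fin d → ℝ) (k : Fin d) :
    dft d x k = ∑ u : Fin d, (x u : ℂ) * dftRoot d k ^ (u : ℕ) := by
  refine sum_congr rfl fun u _ => ?_
  rw [dftRoot, ← Complex.exp_nat_mul]
  ring_nf

lemma dftRoot_pow_val_add [NeZero d] (k u v : Fin d) :
    dftRoot d k ^ ((u + v : Fin d) : ℕ) = dftRoot d k ^ (u : ℕ) * dftRoot d k ^ (v : ℕ) := by
  have hroot : dftRoot d k ^ d = 1 := by
    rw [dftRoot, ← Complex.exp_nat_mul, ← Complex.exp_int_mul_two_pi_mul_I (-(k : ℕ))]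
    congr 1
    field_simp [NeZero.ne (d : ℂ)]
    push_cast
    ring
  rw [← pow_add, Fin.val_add, ← pow_eq_pow_mod _ hroot]

theorem dft_cconv [NeZero d] (a x : Fin d → ℝ) (k : Fin d) :
    dft d (cconv d a x) k = dft d a k * dft d x k := by
  simp only [dft_eq_sum_dftRoot_pow, cconv, Complex.ofReal_sum, Complex.ofReal_mul, sum_mul]
  rw [sum_comm]
  refine sum_congr rfl fun v _ => ?_
  rw [mul_sum, ← Equiv.sum_comp (Equiv.addLeft v)]
  refine sum_congr rfl fun w _ => ?_
  simp only [Equiv.coe_addLeft, add_sub_cancel_left, dftRoot_pow_val_add]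
  ring

def dcCoeff (w : Fin d → ℝ) : ℝ := ∑ u, w u

def nyquistCoeff (w : Fin d → ℝ) : ℝ := ∑ u : Fin d, (-1) ^ (u : ℕ) * w u

lemma dft_of_val_eq_zero (w : Fin d → ℝ) {k : Fin d} (hk : (k : ℕ) = 0) :
    dft d w k = dcCoeff w := by
  simp [dft, dcCoeff, hk]

lemma dft_of_two_mul_val_eq (w : Fin d → ℝ) {k : Fin d} (hk : 2 * (k : ℕ) = d) :
    dft d w k = nyquistCoeff w := by
  simp only [dft, nyquistCoeff, Complex.ofReal_sum, Complex.ofReal_mul]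
  refine sum_congr rfl fun u _ => ?_
  have hk' : (d : ℂ) = 2 * (k : ℕ) := by exact_mod_cast hk.symm
  have hk0 : ((k : ℕ) : ℂ) ≠ 0 := by
    have := Fin.pos k
    exact_mod_cast (show (k : ℕ) ≠ 0 by omega)
  have : -(2 * π * Complex.I * ((k : ℕ) : ℂ) * ((u : ℕ) : ℂ)) / (d : ℂ)
      = (u : ℕ) * (-(π * Complex.I)) := by
    rw [hk']
    field_simp
  rw [this, Complex.exp_nat_mul, Complex.exp_neg, Complex.exp_pi_mul_I]
  push_cast
  ring

lemma dcCoeff_add_smul_single (w : Fin d → ℝ) (x : ℝ) (u : Fin d) :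
    dcCoeff (w + x • Pi.single u 1) = dcCoeff w + x := by
  simp [dcCoeff, sum_add_distrib, Pi.single_apply]

lemma nyquistCoeff_add_smul_single (w : Fin d → ℝ) (x : ℝ) (u : Fin d) :
    nyquistCoeff (w + x • Pi.single u 1) = nyquistCoeff w + (-1) ^ (u : ℕ) * x := by
  simp [nyquistCoeff, mul_add, sum_add_distrib, Pi.single_apply]

lemma dft_add_smul_single_zero [NeZero d] (w : Fin d → ℝ) (x : ℝ) (k : Fin d) :
    dft d (w + x • Pi.single 0 1) k = dft d w k + x := by
  simp [dft, add_mul, sum_add_distrib, Pi.single_apply, apply_ite Complex.ofReal, ite_mul]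

lemma cInner_fourierDisc (ℓ : Fin d) (x : Fin d → ℝ) :
    cInner d (fourierDisc d ℓ) x = dft d x ℓ := by
  refine sum_congr rfl fun u _ => ?_
  rw [fourierDisc, ← Complex.exp_conj, mul_comm]
  congr 2
  simp only [map_div₀, map_mul, Complex.conj_ofReal, Complex.conj_I, map_ofNat, map_natCast]
  ring

@[fun_prop]
lemma continuous_dcCoeff : Continuous (dcCoeff : (Fin d → ℝ) → ℝ) := by
  unfold dcCoeff; fun_prop

@[fun_prop]
lemma continuous_nyquistCoeff : Continuous (nyquistCoeff : (Fin d → ℝ) → ℝ) := by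
  unfold nyquistCoeff; fun_prop

@[fun_prop]
lemma continuous_dft (k : Fin d) : Continuous fun w : Fin d → ℝ => dft d w k := by
  unfold dft; fun_prop

end Fourier

def crossSpec (d n : ℕ) (y : ℕ → Fin d → ℝ) (k k' : Fin d) : ℂ :=
  (n : ℂ)⁻¹ * ∑ i ∈ range n, dft d (y i) k * conj (dft d (y i) k')

/-- The polar form of `rCpx`. -/
def rForm (d n : ℕ) (xs zs : ℕ → Fin d → ℝ) (a : Fin d → ℝ) (b e : Fin d → ℂ) : ℂ :=
  (n : ℂ)⁻¹ * ∑ i ∈ range n, cInner d b (xs i) * conj (cInner d e (xs i))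
    - (n : ℂ)⁻¹ * ∑ i ∈ range n,
        cInner d b (cconv d a (zs i)) * conj (cInner d e (cconv d a (zs i)))

section Discriminator

variable {d n : ℕ} (xs zs : ℕ → Fin d → ℝ) (a : Fin d → ℝ)

lemma cInner_add_mul (b e : Fin d → ℂ) (t : ℂ) (y : Fin d → ℝ) :
    cInner d (fun v => b v + t * e v) y = cInner d b y + conj t * cInner d e y := by
  simp only [cInner, map_add, map_mul, add_mul, sum_add_distrib, mul_sum, mul_assoc]

lemma rCpx_add_smul (b e : Fin d → ℂ) (t : ℝ) :
    rCpx d n xs zs a (fun v => b v + t * e v)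
      = rCpx d n xs zs a b + t * (2 * (rForm d n xs zs a b e).re)
        + t ^ 2 * rCpx d n xs zs a e := by
  have hsq : ∀ A B : ℂ, Complex.normSq (A + t * B)
      = Complex.normSq A + t * (2 * (A * conj B).re) + t ^ 2 * Complex.normSq B := by
    intro A B
    rw [Complex.normSq_add, Complex.normSq_mul, Complex.normSq_ofReal, map_mul,
      Complex.conj_ofReal, mul_left_comm, Complex.re_ofReal_mul]
    ring
  simp only [rCpx, rForm, cInner_add_mul, Complex.conj_ofReal, hsq, sum_add_distrib, ← mul_sum,
    Complex.sub_re]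
  simp only [← Complex.ofReal_natCast, ← Complex.ofReal_inv, Complex.re_ofReal_mul,
    Complex.re_sum]
  ring

lemma cInner_mul (c : ℂ) (e : Fin d → ℂ) (y : Fin d → ℝ) :
    cInner d (fun v => c * e v) y = conj c * cInner d e y := by
  simp only [cInner, map_mul, mul_sum, mul_assoc]

lemma rForm_mul_right (b e : Fin d → ℂ) (c : ℂ) :
    rForm d n xs zs a b (fun v => c * e v) = c * rForm d n xs zs a b e := by
  simp only [rForm, cInner_mul, map_mul, Complex.conj_conj, mul_sum, mul_sub]
  congr 1 <;> exact sum_congr rfl fun i _ => by ring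

lemma rForm_fourierDisc [NeZero d] (k k' : Fin d) :
    rForm d n xs zs a (fourierDisc d k) (fourierDisc d k')
      = crossSpec d n xs k k' - dft d a k * conj (dft d a k') * crossSpec d n zs k k' := by
  simp only [rForm, crossSpec, cInner_fourierDisc, dft_cconv, map_mul, mul_sum]
  congr 1
  exact sum_congr rfl fun i _ => by ring

lemma rCpx_fourierDisc [NeZero d] (k : Fin d) :
    rCpx d n xs zs a (fourierDisc d k)
      = empPS d n xs k - Complex.normSq (dft d a k) * empPS d n zs k := by
  simp only [rCpx, empPS, cInner_fourierDisc, dft_cconv, Complex.normSq_mul, ← mul_sum]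
  ring

end Discriminator

section Equilibrium

variable {d n : ℕ} {xs zs : ℕ → Fin d → ℝ} {a : Fin d → ℝ}

lemma rCpx_mul (c : ℂ) (e : Fin d → ℂ) :
    rCpx d n xs zs a (fun v => c * e v) = Complex.normSq c * rCpx d n xs zs a e := by
  simp only [rCpx, cInner_mul, Complex.normSq_mul, Complex.normSq_conj, ← mul_sum]
  ring

lemma rCpx_fourierDisc_eq_zero [NeZero d] {k : Fin d} (hz : empPS d n zs k ≠ 0)
    (ha : Complex.normSq (dft d a k) = empPS d n xs k / empPS d n zs k) :
    rCpx d n xs zs a (fourierDisc d k) = 0 := by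
  rw [rCpx_fourierDisc, ha, div_mul_cancel₀ _ hz, sub_self]

lemma re_rForm_fourierDisc_conj_mul (k k' : Fin d) :
    (rForm d n xs zs a (fourierDisc d k)
            (fun v => conj (rForm d n xs zs a (fourierDisc d k) (fourierDisc d k'))
          * fourierDisc d k' v)).re
      = Complex.normSq (rForm d n xs zs a (fourierDisc d k) (fourierDisc d k')) := by
  rw [rForm_mul_right, ← Complex.normSq_eq_conj_mul_self, Complex.ofReal_re]

variable (hdiag : ∀ ℓ, rCpx d n xs zs a (fourierDisc d ℓ) = 0)
include hdiag

lemma VCpx_fourierDisc_eq_zero : VCpx d n d xs zs a (fourierDisc d) = 0 := by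
  simp [VCpx, hdiag]

lemma VCpx_fourierDisc_add_smul (η : Fin d → Fin d → ℂ) (t : ℝ) :
    VCpx d n d xs zs a (fun ℓ v => fourierDisc d ℓ v + t * η ℓ v)
      = ∑ ℓ, (t * (2 * (rForm d n xs zs a (fourierDisc d ℓ) (η ℓ)).re)
          + t ^ 2 * rCpx d n xs zs a (η ℓ)) ^ 2 := by
  simp only [VCpx, rCpx_add_smul, hdiag, zero_add]

lemma iteratedDeriv_two_VCpx_fourierDisc_add_smul (η : Fin d → Fin d → ℂ) :
    iteratedDeriv 2
      (fun t : ℝ => VCpx d n d xs zs a (fun ℓ v => fourierDisc d ℓ v + t * η ℓ v)) 0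
      = 2 * ∑ ℓ, (2 * (rForm d n xs zs a (fourierDisc d ℓ) (η ℓ)).re) ^ 2 := by
  simp only [VCpx_fourierDisc_add_smul hdiag]
  exact iteratedDeriv_two_sum_sq _ _ _

lemma exists_VCpx_pos {k k' : Fin d}
    (hW : rForm d n xs zs a (fourierDisc d k) (fourierDisc d k') ≠ 0) :
    ∃ b, 0 < VCpx d n d xs zs a b := by
  set W := rForm d n xs zs a (fourierDisc d k) (fourierDisc d k')
  refine ⟨fun _ v => fourierDisc d k v + ((1 : ℝ) : ℂ) * (conj W * fourierDisc d k' v), ?_⟩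
  have hrow :=
    rCpx_add_smul (n := n) xs zs a (fourierDisc d k) (fun v => conj W * fourierDisc d k' v) 1
  rw [rCpx_mul, hdiag, hdiag, re_rForm_fourierDisc_conj_mul] at hrow
  have hWpos := Complex.normSq_pos.2 hW
  simp only [VCpx, hrow, mul_zero, add_zero, zero_add, one_mul]
  exact sum_pos (fun _ _ => by positivity) ⟨k, mem_univ _⟩

lemma iteratedDeriv_two_VCpx_fourierDisc_add_smul_nonneg (η : Fin d → Fin d → ℂ) :
    0 ≤ iteratedDeriv 2
      (fun t : ℝ => VCpx d n d xs zs a (fun ℓ v => fourierDisc d ℓ v + t * η ℓ v)) 0 := by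
  rw [iteratedDeriv_two_VCpx_fourierDisc_add_smul hdiag]
  positivity

lemma exists_iteratedDeriv_two_VCpx_fourierDisc_add_smul_pos {k k' : Fin d}
    (hW : rForm d n xs zs a (fourierDisc d k) (fourierDisc d k') ≠ 0) :
    ∃ η : Fin d → Fin d → ℂ, 0 < iteratedDeriv 2
      (fun t : ℝ => VCpx d n d xs zs a (fun ℓ v => fourierDisc d ℓ v + t * η ℓ v)) 0 := by
  set W := rForm d n xs zs a (fourierDisc d k) (fourierDisc d k')
  refine ⟨fun _ v => conj W * fourierDisc d k' v, ?_⟩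
  rw [iteratedDeriv_two_VCpx_fourierDisc_add_smul hdiag]
  refine mul_pos two_pos (sum_pos' (fun _ _ => sq_nonneg _) ⟨k, mem_univ _, ?_⟩)
  rw [re_rForm_fourierDisc_conj_mul]
  have := Complex.normSq_pos.2 hW
  positivity

end Equilibrium

section Coherence

variable {d n : ℕ} [NeZero d]

lemma crossSpec_cconv (a : Fin d → ℝ) (y : ℕ → Fin d → ℝ) (k k' : Fin d) :
    crossSpec d n (fun i => cconv d a (y i)) k k'
      = dft d a k * conj (dft d a k') * crossSpec d n y k k' := by
  simp only [crossSpec, dft_cconv, map_mul, mul_sum]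
  exact sum_congr rfl fun i _ => by ring

lemma empPS_cconv (a : Fin d → ℝ) (y : ℕ → Fin d → ℝ) (k : Fin d) :
    empPS d n (fun i => cconv d a (y i)) k = Complex.normSq (dft d a k) * empPS d n y k := by
  simp only [empPS, dft_cconv, Complex.normSq_mul, ← mul_sum]
  ring

/-- Convolution by `ᾱ` preserves the squared coherence `|crossSpec k k'|² / (empPS k empPS k')`,
so a vanishing off-diagonal entry forces `z̄` and `z` to have equal coherence. -/
lemma rForm_fourierDisc_ne_zero {abar a₀ : Fin d → ℝ} {zbar zs : ℕ → Fin d → ℝ} {k k' : Fin d}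
    (habar : ∀ k, dft d abar k ≠ 0) (hz : ∀ k, empPS d n zs k ≠ 0)
    (ha₀ : a₀ ∈ An d n abar zbar zs)
    (hcoh : Complex.normSq (crossSpec d n zbar k k') * (empPS d n zs k * empPS d n zs k')
      ≠ (empPS d n zbar k * empPS d n zbar k') * Complex.normSq (crossSpec d n zs k k')) :
    rForm d n (fun i => cconv d abar (zbar i)) zs a₀ (fourierDisc d k) (fourierDisc d k') ≠ 0 := by
  intro hW
  rw [rForm_fourierDisc, crossSpec_cconv, sub_eq_zero] at hW
  have h := congrArg Complex.normSq hW
  simp only [Complex.normSq_mul, Complex.normSq_conj] at h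
  rw [ha₀ k, ha₀ k', empPS_cconv, empPS_cconv] at h
  have hk := hz k
  have hk' := hz k'
  field_simp at h
  refine hcoh (mul_left_cancel₀ (mul_ne_zero (Complex.normSq_pos.2 (habar k)).ne'
    (Complex.normSq_pos.2 (habar k')).ne') ?_)
  linear_combination h

end Coherence

section DCNyquist

variable {d : ℕ}

/-- With `gramNyquist` and `gramCross`, the Gram matrix of the vectors `(dcCoeff (y i))_{i<n}`
and `(nyquistCoeff (y i))_{i<n}`. -/
def gramDC (n : ℕ) (y : ℕ → Fin d → ℝ) : ℝ := ∑ i ∈ range n, dcCoeff (y i) ^ 2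

def gramNyquist (n : ℕ) (y : ℕ → Fin d → ℝ) : ℝ := ∑ i ∈ range n, nyquistCoeff (y i) ^ 2

def gramCross (n : ℕ) (y : ℕ → Fin d → ℝ) : ℝ :=
  ∑ i ∈ range n, dcCoeff (y i) * nyquistCoeff (y i)

lemma gramDC_succ (m : ℕ) (y : ℕ → Fin d → ℝ) :
    gramDC (m + 1) y = gramDC m (fun i => y (i + 1)) + dcCoeff (y 0) ^ 2 :=
  sum_range_succ' _ m

lemma gramNyquist_succ (m : ℕ) (y : ℕ → Fin d → ℝ) :
    gramNyquist (m + 1) y = gramNyquist m (fun i => y (i + 1)) + nyquistCoeff (y 0) ^ 2 :=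
  sum_range_succ' _ m

lemma gramCross_succ (m : ℕ) (y : ℕ → Fin d → ℝ) :
    gramCross (m + 1) y = gramCross m (fun i => y (i + 1)) + dcCoeff (y 0) * nyquistCoeff (y 0) :=
  sum_range_succ' _ m

variable {n : ℕ}

lemma crossSpec_eq_gramCross (y : ℕ → Fin d → ℝ) {k₀ k₁ : Fin d} (hk₀ : (k₀ : ℕ) = 0)
    (hk₁ : 2 * (k₁ : ℕ) = d) : crossSpec d n y k₀ k₁ = ((n : ℝ)⁻¹ * gramCross n y : ℝ) := by
  simp [crossSpec, gramCross, dft_of_val_eq_zero _ hk₀, dft_of_two_mul_val_eq _ hk₁]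

lemma empPS_eq_gramDC (y : ℕ → Fin d → ℝ) {k : Fin d} (hk : (k : ℕ) = 0) :
    empPS d n y k = (n : ℝ)⁻¹ * gramDC n y := by
  simp [empPS, gramDC, dft_of_val_eq_zero _ hk, Complex.normSq_ofReal, sq]

lemma empPS_eq_gramNyquist (y : ℕ → Fin d → ℝ) {k : Fin d} (hk : 2 * (k : ℕ) = d) :
    empPS d n y k = (n : ℝ)⁻¹ * gramNyquist n y := by
  simp [empPS, gramNyquist, dft_of_two_mul_val_eq _ hk, Complex.normSq_ofReal, sq]

lemma coherence_ne_of_gram (hn : n ≠ 0) {y y' : ℕ → Fin d → ℝ} {k₀ k₁ : Fin d}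
    (hk₀ : (k₀ : ℕ) = 0) (hk₁ : 2 * (k₁ : ℕ) = d)
    (h : gramCross n y ^ 2 * (gramDC n y' * gramNyquist n y')
      ≠ (gramDC n y * gramNyquist n y) * gramCross n y' ^ 2) :
    Complex.normSq (crossSpec d n y k₀ k₁) * (empPS d n y' k₀ * empPS d n y' k₁)
      ≠ (empPS d n y k₀ * empPS d n y k₁) * Complex.normSq (crossSpec d n y' k₀ k₁) := by
  rw [crossSpec_eq_gramCross _ hk₀ hk₁, crossSpec_eq_gramCross _ hk₀ hk₁, Complex.normSq_ofReal,
    Complex.normSq_ofReal, empPS_eq_gramDC _ hk₀, empPS_eq_gramDC _ hk₀,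
    empPS_eq_gramNyquist _ hk₁, empPS_eq_gramNyquist _ hk₁]
  intro heq
  have hn' : ((n : ℝ)⁻¹) ^ 4 ≠ 0 := pow_ne_zero 4 (inv_ne_zero (Nat.cast_ne_zero.2 hn))
  exact h (mul_left_cancel₀ hn' (by linear_combination heq))

lemma empPS_ne_zero (hn : n ≠ 0) {y : ℕ → Fin d → ℝ} {k : Fin d}
    (hy : dft d (y 0) k ≠ 0) : empPS d n y k ≠ 0 :=
  (mul_pos (inv_pos.2 (Nat.cast_pos.2 (Nat.pos_of_ne_zero hn)))
    (sum_pos' (f := fun i => Complex.normSq (dft d (y i) k)) (fun _ _ => Complex.normSq_nonneg _)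
      ⟨0, mem_range.2 (Nat.pos_of_ne_zero hn), Complex.normSq_pos.2 hy⟩)).ne'

end DCNyquist

section WhiteNoise

variable {d : ℕ}

/-- Indexed like `coords`, so that `sampleSeq (fun q => coords d zbar z q ω) true i` is `z i ω`
by definition. -/
def sampleSeq (v : Bool × ℕ × Fin d → ℝ) (b : Bool) (i : ℕ) : Fin d → ℝ := fun u => v (b, i, u)

@[fun_prop]
lemma continuous_sampleSeq (b : Bool) (i : ℕ) :
    Continuous fun v : Bool × ℕ × Fin d → ℝ => sampleSeq v b i :=
  continuous_pi fun _ => continuous_apply _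

lemma sampleSeq_add_smul_single (v : Bool × ℕ × Fin d → ℝ) (x : ℝ) (b : Bool) (i : ℕ)
    (u : Fin d) :
    sampleSeq (v + x • Pi.single (b, i, u) 1) b i = sampleSeq v b i + x • Pi.single u 1 := by
  ext u'
  simp [sampleSeq, Pi.single_apply]

lemma sampleSeq_add_smul_single_of_ne (v : Bool × ℕ × Fin d → ℝ) (x : ℝ) {b b' : Bool}
    {i i' : ℕ} (h : (b', i') ≠ (b, i)) (u : Fin d) :
    sampleSeq (v + x • Pi.single (b, i, u) 1) b' i' = sampleSeq v b' i' := by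
  ext u'
  have hne : (b', i', u') ≠ (b, i, u) := fun h' => h (by simp_all)
  simp [sampleSeq, Pi.single_eq_of_ne hne]

lemma sampleSeq_add_smul_single_of_ne_kind (v : Bool × ℕ × Fin d → ℝ) (x : ℝ) {b b' : Bool}
    (h : b' ≠ b) (i : ℕ) (u : Fin d) :
    sampleSeq (v + x • Pi.single (b, i, u) 1) b' = sampleSeq v b' :=
  funext fun _ => sampleSeq_add_smul_single_of_ne v x (by simp [h]) u

variable {Ω : Type*} [MeasureSpace Ω] [IsProbabilityMeasure (ℙ : Measure Ω)]
  {zbar z : ℕ → Ω → Fin d → ℝ}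

open Polynomial in
theorem IsWhiteNoisePair.ae_ne_zero_of_eval_line (hwn : IsWhiteNoisePair d zbar z)
    (p : Bool × ℕ × Fin d) {F L : (Bool × ℕ × Fin d → ℝ) → ℝ} (hF : Continuous F)
    (hL : Continuous L) (g : (Bool × ℕ × Fin d → ℝ) → ℝ[X])
    (hFg : ∀ (v : Bool × ℕ × Fin d → ℝ) (x : ℝ), F (v + x • Pi.single p 1) = (g v).eval x)
    (hLg : ∀ (v : Bool × ℕ × Fin d → ℝ) (x : ℝ), L (v + x • Pi.single p 1) ≠ 0 → g v ≠ 0) :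
    ∀ᵐ ω ∂ℙ, L (fun q => coords d zbar z q ω) ≠ 0 → F (fun q => coords d zbar z q ω) ≠ 0 := by
  obtain ⟨hzbar, hz, hind, hgauss⟩ := hwn
  have hmeas : ∀ q, Measurable (coords d zbar z q) := fun ⟨b, i, u⟩ => by
    cases b
    · exact (measurable_pi_apply u).comp (hzbar i)
    · exact (measurable_pi_apply u).comp (hz i)
  refine hind.ae_ne_zero_of_eval_line hmeas p ?_ hF.measurable hL.measurable g hFg hLg
  rw [hgauss p]
  exact gaussianReal_absolutelyContinuous 0 one_ne_zero

end WhiteNoise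

section AlmostSure

open Polynomial

variable {d n : ℕ} {Ω : Type*} [MeasureSpace Ω] [IsProbabilityMeasure (ℙ : Measure Ω)]
  {zbar z : ℕ → Ω → Fin d → ℝ}

theorem IsWhiteNoisePair.ae_dft_ne_zero [NeZero d] (hwn : IsWhiteNoisePair d zbar z)
    (k : Fin d) : ∀ᵐ ω ∂ℙ, dft d (z 0 ω) k ≠ 0 := by
  have h := hwn.ae_ne_zero_of_eval_line (true, 0, 0)
    (F := fun v => (dft d (sampleSeq v true 0) k).re) (L := fun _ => 1) (by fun_prop)
    continuous_const
    (fun v => X + C (dft d (sampleSeq v true 0) k).re)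
    (fun v x => by simp [sampleSeq_add_smul_single, dft_add_smul_single_zero, add_comm])
    (fun _ _ _ => X_add_C_ne_zero _)
  filter_upwards [h] with ω hω hdft
  exact hω one_ne_zero (congrArg Complex.re hdft)

theorem IsWhiteNoisePair.ae_dcCoeff_ne_nyquistCoeff (hwn : IsWhiteNoisePair d zbar z)
    (hd : 1 < d) : ∀ᵐ ω ∂ℙ, dcCoeff (z 1 ω) ≠ nyquistCoeff (z 1 ω) := by
  have h := hwn.ae_ne_zero_of_eval_line (true, 1, ⟨1, hd⟩)
    (F := fun v => dcCoeff (sampleSeq v true 1) - nyquistCoeff (sampleSeq v true 1))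
    (L := fun _ => 1) (by fun_prop) continuous_const
    (fun v => C 2 * X + C (dcCoeff (sampleSeq v true 1) - nyquistCoeff (sampleSeq v true 1)))
    (fun v x => by
      simp only [sampleSeq_add_smul_single, dcCoeff_add_smul_single,
        nyquistCoeff_add_smul_single, pow_one, neg_mul, one_mul, eval_add, eval_mul, eval_C, eval_X]
      ring)
    (fun _ _ _ h0 => by simpa using congrArg (coeff · 1) h0)
  filter_upwards [h] with ω hω
  exact sub_ne_zero.1 (hω one_ne_zero)

/-- Along the line through the coordinate `z_0(0)` the Gram determinant is a quadratic with
leading coefficient `∑_{1 ≤ i < n} (dcCoeff (z i) - nyquistCoeff (z i))²`. -/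
theorem IsWhiteNoisePair.ae_gram_det_ne_zero (hwn : IsWhiteNoisePair d zbar z) (hd : 1 < d)
    (hn : 2 ≤ n) :
    ∀ᵐ ω ∂ℙ, gramDC n (z · ω) * gramNyquist n (z · ω) - gramCross n (z · ω) ^ 2 ≠ 0 := by
  obtain ⟨m, rfl⟩ : ∃ m, n = m + 1 := ⟨n - 1, by omega⟩
  have h := hwn.ae_ne_zero_of_eval_line (true, 0, ⟨0, by omega⟩)
    (F := fun v => gramDC (m + 1) (sampleSeq v true) * gramNyquist (m + 1) (sampleSeq v true)
      - gramCross (m + 1) (sampleSeq v true) ^ 2)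
    (L := fun v => dcCoeff (sampleSeq v true 1) - nyquistCoeff (sampleSeq v true 1))
    (by unfold gramDC gramNyquist gramCross; fun_prop) (by fun_prop)
    (fun v =>
      C (gramNyquist m (sampleSeq v true <| · + 1)) * (X + C (dcCoeff (sampleSeq v true 0))) ^ 2
        + C (gramDC m (sampleSeq v true <| · + 1)) * (X + C (nyquistCoeff (sampleSeq v true 0))) ^ 2
        - C (2 * gramCross m (sampleSeq v true <| · + 1))
          * ((X + C (dcCoeff (sampleSeq v true 0))) * (X + C (nyquistCoeff (sampleSeq v true 0))))
        + C (gramDC m (sampleSeq v true <| · + 1) * gramNyquist m (sampleSeq v true <| · + 1)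
          - gramCross m (sampleSeq v true <| · + 1) ^ 2))
    (fun v x => by
      simp only [gramDC_succ, gramNyquist_succ, gramCross_succ, sampleSeq_add_smul_single,
        sampleSeq_add_smul_single_of_ne _ _ (show (true, _ + 1) ≠ (true, 0) by simp),
        dcCoeff_add_smul_single, nyquistCoeff_add_smul_single, pow_zero, one_mul,
        eval_add, eval_sub, eval_mul, eval_pow, eval_C, eval_X]
      ring)
    (fun v x hL => by
      rw [sampleSeq_add_smul_single_of_ne _ _ (by simp)] at hL
      refine ne_zero_of_natDegree_gt (n := 1) (one_lt_two.trans_eq (Eq.symm ?_))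
      compute_degree!
      have hsq : ∀ y : ℕ → Fin d → ℝ, gramNyquist m y + gramDC m y - 2 * gramCross m y
          = ∑ i ∈ range m, (dcCoeff (y i) - nyquistCoeff (y i)) ^ 2 := fun y => by
        simp only [gramDC, gramNyquist, gramCross, sub_sq, sum_add_distrib, sum_sub_distrib,
          mul_assoc, ← mul_sum]
        ring
      rw [hsq]
      exact (sum_pos' (fun _ _ => sq_nonneg _) ⟨0, mem_range.2 (by omega), by positivity⟩).ne')
  filter_upwards [h, hwn.ae_dcCoeff_ne_nyquistCoeff hd] with ω hω h1
  exact hω (sub_ne_zero.2 h1)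

/-- Along the line through the coordinate `z̄_0(0)` the difference of the two sides is a quartic
whose leading coefficient is the Gram determinant of the samples `z`. -/
theorem IsWhiteNoisePair.ae_coherence_ne (hwn : IsWhiteNoisePair d zbar z) (hd : 1 < d)
    (hn : 2 ≤ n) :
    ∀ᵐ ω ∂ℙ, gramCross n (zbar · ω) ^ 2 * (gramDC n (z · ω) * gramNyquist n (z · ω))
      ≠ (gramDC n (zbar · ω) * gramNyquist n (zbar · ω)) * gramCross n (z · ω) ^ 2 := by
  obtain ⟨m, rfl⟩ : ∃ m, n = m + 1 := ⟨n - 1, by omega⟩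
  have h := hwn.ae_ne_zero_of_eval_line (false, 0, ⟨0, by omega⟩)
    (F := fun v => gramCross (m + 1) (sampleSeq v false) ^ 2
        * (gramDC (m + 1) (sampleSeq v true) * gramNyquist (m + 1) (sampleSeq v true))
      - (gramDC (m + 1) (sampleSeq v false) * gramNyquist (m + 1) (sampleSeq v false))
        * gramCross (m + 1) (sampleSeq v true) ^ 2)
    (L := fun v => gramDC (m + 1) (sampleSeq v true) * gramNyquist (m + 1) (sampleSeq v true)
      - gramCross (m + 1) (sampleSeq v true) ^ 2)
    (by unfold gramDC gramNyquist gramCross; fun_prop)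
    (by unfold gramDC gramNyquist gramCross; fun_prop)
    (fun v =>
      ((X + C (dcCoeff (sampleSeq v false 0))) * (X + C (nyquistCoeff (sampleSeq v false 0)))
          + C (gramCross m (sampleSeq v false <| · + 1))) ^ 2
        * C (gramDC (m + 1) (sampleSeq v true) * gramNyquist (m + 1) (sampleSeq v true))
      - ((X + C (dcCoeff (sampleSeq v false 0))) ^ 2 + C (gramDC m (sampleSeq v false <| · + 1)))
        * ((X + C (nyquistCoeff (sampleSeq v false 0))) ^ 2
          + C (gramNyquist m (sampleSeq v false <| · + 1)))
        * C (gramCross (m + 1) (sampleSeq v true) ^ 2))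
    (fun v x => by
      simp only [gramDC_succ, gramNyquist_succ, gramCross_succ, sampleSeq_add_smul_single,
        sampleSeq_add_smul_single_of_ne _ _ (show (false, _ + 1) ≠ (false, 0) by simp),
        sampleSeq_add_smul_single_of_ne_kind _ _ (by decide : true ≠ false),
        dcCoeff_add_smul_single, nyquistCoeff_add_smul_single, pow_zero, one_mul,
        eval_add, eval_sub, eval_mul, eval_pow, eval_C, eval_X]
      ring)
    (fun v x hL => by
      rw [sampleSeq_add_smul_single_of_ne_kind _ _ (by decide : true ≠ false)] at hL
      refine ne_zero_of_natDegree_gt (n := 3) (Nat.lt_succ_self 3 |>.trans_eq (Eq.symm ?_))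
      compute_degree!)
  filter_upwards [h, hwn.ae_gram_det_ne_zero hd (n := m + 1) hn] with ω hω hgram
  exact sub_ne_zero.1 (hω hgram)

end AlmostSure

theorem stmt8 {d n : ℕ} (hd : 1 ≤ d) (hdeven : Even d) (hn : 2 ≤ n)
    {Ω : Type*} [MeasureSpace Ω] [IsProbabilityMeasure (ℙ : Measure Ω)]
    (abar : Fin d → ℝ) (habar : ∀ k : Fin d, dft d abar k ≠ 0)
    (zbar z : ℕ → Ω → Fin d → ℝ) (hwn : IsWhiteNoisePair d zbar z) :
    ∀ᵐ ω ∂ℙ, ∀ a₀ ∈ An d n abar (fun i => zbar i ω) (fun i => z i ω),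
      -- `(α̊, β̊)` is not a Nash equilibrium of `V_n`
      (¬ ((∀ b : Fin d → Fin d → ℂ,
            VCpx d n d (fun i => cconv d abar (zbar i ω)) (fun i => z i ω) a₀ b ≤
              VCpx d n d (fun i => cconv d abar (zbar i ω)) (fun i => z i ω) a₀
                (fourierDisc d)) ∧
          (∀ a : Fin d → ℝ,
            VCpx d n d (fun i => cconv d abar (zbar i ω)) (fun i => z i ω) a₀
                (fourierDisc d) ≤
              VCpx d n d (fun i => cconv d abar (zbar i ω)) (fun i => z i ω) a
                (fourierDisc d)))) ∧
      -- `V_n(α̊, β̊) = 0` and there is `β` with `V_n(α̊, β) > 0`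
      VCpx d n d (fun i => cconv d abar (zbar i ω)) (fun i => z i ω) a₀ (fourierDisc d)
          = 0 ∧
      (∃ b : Fin d → Fin d → ℂ,
        0 < VCpx d n d (fun i => cconv d abar (zbar i ω)) (fun i => z i ω) a₀ b) ∧
      -- the Hessian of `β ↦ V_n(α̊, β)` (in the real and imaginary parts of `β`)
      -- at `β̊` is positive semidefinite ...
      (∀ η : Fin d → Fin d → ℂ,
        0 ≤ iteratedDeriv 2 (fun t : ℝ =>
          VCpx d n d (fun i => cconv d abar (zbar i ω)) (fun i => z i ω) a₀
            (fun ℓ v => fourierDisc d ℓ v + (t : ℂ) * η ℓ v)) 0) ∧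
      -- ... with at least one strictly positive eigenvalue
      (∃ η : Fin d → Fin d → ℂ,
        0 < iteratedDeriv 2 (fun t : ℝ =>
          VCpx d n d (fun i => cconv d abar (zbar i ω)) (fun i => z i ω) a₀
            (fun ℓ v => fourierDisc d ℓ v + (t : ℂ) * η ℓ v)) 0) := by
  obtain ⟨m, hm⟩ := hdeven
  have : NeZero d := ⟨by omega⟩
  filter_upwards [ae_all_iff.2 hwn.ae_dft_ne_zero, hwn.ae_coherence_ne (by omega) hn]
    with ω hdft hcoh a₀ ha₀
  have hz := fun k => empPS_ne_zero (n := n) (y := fun i => z i ω) (by omega) (hdft k)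
  have hdiag := fun ℓ => rCpx_fourierDisc_eq_zero (hz ℓ) (ha₀ ℓ)
  have hW := rForm_fourierDisc_ne_zero (k := ⟨0, by omega⟩) (k' := ⟨m, by omega⟩) habar hz ha₀
    (coherence_ne_of_gram (by omega) rfl (by dsimp only; omega) hcoh)
  have hV := VCpx_fourierDisc_eq_zero hdiag
  obtain ⟨b, hb⟩ := exists_VCpx_pos hdiag hW
  exact ⟨fun hnash => (hnash.1 b).not_gt (hV ▸ hb), hV, ⟨b, hb⟩,
    iteratedDeriv_two_VCpx_fourierDisc_add_smul_nonneg hdiag,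
    exists_iteratedDeriv_two_VCpx_fourierDisc_add_smul_pos hdiag hW⟩
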